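/- arXiv:math/0610953 — 2 statements merged into one kernel-verified Lean document; each statement's English description precedes it below -/
import Mathlib

section
/- If {a_m}_{m≥0} is a square-summable sequence of complex numbers and Σ_{m=0}^∞ a_m e^{-mt} = 0 for all t in some nondegenerate interval [0, t₁] with t₁ > 0, then a_m = 0 for all m. -/
open Complex

/-- Uniqueness lemma for Dirichlet series with nonnegative integer exponents: if `{a_m}` is
square-summable and `Σ_m a_m e^{-mt} = 0` for all `t` in a nondegenerate interval `[0, t₁]`,
then all coefficients vanish. -/
theorem dirichlet_series_uniqueness (a : ℕ → ℂ)
    (ha : Summable fun m => ‖a m‖ ^ 2)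
    (t₁ : ℝ) (ht₁ : 0 < t₁)
    (h : ∀ t ∈ Set.Icc (0 : ℝ) t₁,
      HasSum (fun m : ℕ => a m * Complex.exp (-(m : ℂ) * (t : ℂ))) 0) :
    ∀ m, a m = 0 := by
  -- the coefficients are bounded
  have hb : ∃ C : ℝ, ∀ n, ‖a n‖ ≤ C := by
    have h0 : Filter.Tendsto (fun n => ‖a n‖ ^ 2) Filter.atTop (nhds 0) :=
      ha.tendsto_atTop_zero
    have h1 : Filter.Tendsto (fun n => ‖a n‖) Filter.atTop (nhds 0) := by
      have heq : (fun n => ‖a n‖) = fun n => Real.sqrt (‖a n‖ ^ 2) :=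
        funext fun n => (Real.sqrt_sq (norm_nonneg _)).symm
      rw [heq]
      simpa [Function.comp_def] using (Real.continuous_sqrt.tendsto 0).comp h0
    obtain ⟨C, hC⟩ := h1.bddAbove_range
    exact ⟨C, fun n => hC ⟨n, rfl⟩⟩
  obtain ⟨C, hC⟩ := hb
  set p : FormalMultilinearSeries ℂ ℂ ℂ := FormalMultilinearSeries.ofScalars ℂ a with hp
  have hrad : (1 : ENNReal) ≤ p.radius := by
    have := p.le_radius_of_bound C (r := 1) (fun n => by
      rw [hp, FormalMultilinearSeries.ofScalars_norm]
      simpa using hC n)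
    simpa using this
  have hrpos : (0 : ENNReal) < p.radius := lt_of_lt_of_le one_pos hrad
  have hball : HasFPowerSeriesOnBall p.sum p 0 p.radius := p.hasFPowerSeriesOnBall hrpos
  -- the sum vanishes at `exp (-t)` for `t ∈ [0, t₁]`
  have hsum0 : ∀ t ∈ Set.Icc (0 : ℝ) t₁, p.sum (Complex.exp (-(t : ℂ))) = 0 := by
    intro t ht
    have hhs := h t ht
    have heq : (fun m : ℕ => a m * Complex.exp (-(m : ℂ) * (t : ℂ)))
        = fun m : ℕ => p m fun _ => Complex.exp (-(t : ℂ)) := by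
      funext m
      rw [FormalMultilinearSeries.ofScalars_apply_eq, smul_eq_mul, ← Complex.exp_nat_mul]
      ring_nf
    rw [heq] at hhs
    exact hhs.tsum_eq
  -- identity theorem on the unit ball
  set x₀ : ℂ := Complex.exp (-(t₁ : ℂ)) with hx₀
  have hnorm : ∀ s : ℝ, ‖Complex.exp (-(s : ℂ))‖ = Real.exp (-s) := by
    intro s
    simp [Complex.norm_exp]
  have hx₀mem : x₀ ∈ Metric.ball (0 : ℂ) 1 := by
    simp only [Metric.mem_ball, dist_zero_right, hx₀, hnorm t₁]
    exact Real.exp_lt_one_iff.mpr (by linarith)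
  have han : AnalyticOnNhd ℂ p.sum (Metric.ball (0 : ℂ) 1) := by
    intro x hx
    refine hball.analyticAt_of_mem ?_
    rw [EMetric.mem_ball, edist_zero_right]
    calc ‖x‖₊ < (1 : ENNReal) := by
          rw [Metric.mem_ball, dist_zero_right] at hx
          exact_mod_cast hx
      _ ≤ p.radius := hrad
  -- frequently zero near x₀
  have hfreq : ∃ᶠ z in nhdsWithin x₀ {x₀}ᶜ, p.sum z = 0 := by
    set u : ℕ → ℂ := fun k => Complex.exp (-((t₁ - t₁ / (k + 2) : ℝ) : ℂ)) with hu
    have hs_mem : ∀ k : ℕ, (t₁ - t₁ / (k + 2)) ∈ Set.Icc (0 : ℝ) t₁ := by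
      intro k
      have hk2 : (0 : ℝ) < (k : ℝ) + 2 := by positivity
      constructor
      · have : t₁ / (k + 2) ≤ t₁ / 1 := by
          apply div_le_div_of_nonneg_left ht₁.le one_pos
          linarith
        simp only [div_one] at this; linarith
      · have : 0 < t₁ / (k + 2) := div_pos ht₁ hk2
        linarith
    have hs_ne : ∀ k : ℕ, (t₁ - t₁ / (k + 2)) ≠ t₁ := by
      intro k
      have hk2 : (0 : ℝ) < (k : ℝ) + 2 := by positivity
      have : 0 < t₁ / (k + 2) := div_pos ht₁ hk2
      intro hcon; linarith [sub_eq_self.mp hcon ▸ this]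
    have hu_ne : ∀ k, u k ≠ x₀ := by
      intro k hcon
      apply hs_ne k
      have h1 : Real.exp (-(t₁ - t₁ / (k + 2))) = Real.exp (-t₁) := by
        have := congrArg norm hcon
        rwa [hu, hnorm, hx₀, hnorm] at this
      have := Real.exp_injective h1
      linarith [neg_injective this]
    have hu_tendsto : Filter.Tendsto u Filter.atTop (nhds x₀) := by
      have hts : Filter.Tendsto (fun k : ℕ => (t₁ - t₁ / (k + 2) : ℝ)) Filter.atTop (nhds t₁) := by
        have : Filter.Tendsto (fun k : ℕ => ((k : ℝ) + 2)) Filter.atTop Filter.atTop :=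
          Filter.tendsto_atTop_add_const_right _ 2 tendsto_natCast_atTop_atTop
        have hdiv : Filter.Tendsto (fun k : ℕ => t₁ / ((k : ℝ) + 2)) Filter.atTop (nhds 0) :=
          Filter.Tendsto.div_atTop tendsto_const_nhds this
        simpa using (tendsto_const_nhds (x := t₁)).sub hdiv
      have hcont : Continuous fun s : ℝ => Complex.exp (-(s : ℂ)) := by
        exact Complex.continuous_exp.comp (continuous_neg.comp Complex.continuous_ofReal)
      exact (hcont.tendsto t₁).comp hts
    have hu_tendsto' : Filter.Tendsto u Filter.atTop (nhdsWithin x₀ {x₀}ᶜ) := by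
      rw [tendsto_nhdsWithin_iff]
      exact ⟨hu_tendsto, Filter.Eventually.of_forall fun k => hu_ne k⟩
    exact hu_tendsto'.frequently (Filter.Frequently.of_forall fun k =>
      hsum0 _ (hs_mem k))
  have hzero : Set.EqOn p.sum 0 (Metric.ball (0 : ℂ) 1) :=
    han.eqOn_zero_of_preconnected_of_frequently_eq_zero
      (convex_ball (0 : ℂ) 1).isPreconnected hx₀mem hfreq
  have hev : p.sum =ᶠ[nhds (0 : ℂ)] 0 :=
    Filter.eventuallyEq_of_mem (Metric.isOpen_ball.mem_nhds (by simp)) hzero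
  have hp0 : p = 0 := hball.hasFPowerSeriesAt.eq_zero_of_eventually hev
  have := (FormalMultilinearSeries.ofScalars_series_eq_zero ℂ (c := a)).mp hp0
  exact fun m => congrFun this m
end

section
/- More generally, if 0 ≤ r_0 < r_1 < r_2 < ... is a strictly increasing sequence of reals with r_n → ∞, {a_n} is bounded, and Σ_{n=0}^∞ a_n e^{-r_n t} = 0 for all t in an interval (0, t₁), then a_n = 0 for all n. -/
open Complex Filter Topology

/-!
Absolute convergence at a point `s ∈ (0, t₁)` makes `z ↦ Σ aₙ e^{-rₙ z}` holomorphic on the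
half-plane `Re z > s` (Weierstrass M-test, using `rₙ ≥ 0`). It vanishes on a real interval, hence on
the whole half-plane, in particular for all large real `t`. If `aₘ = 0` for `m < n`, then
`e^{rₙ t} Σ aₘ e^{-rₘ t} → aₙ` as `t → ∞` by dominated convergence, because `rₘ > rₙ` for
`m > n`; so `aₙ = 0`.
-/

theorem norm_mul_exp_neg_ofReal_mul (c : ℂ) (x : ℝ) (z : ℂ) :
    ‖c * exp (-(x : ℂ) * z)‖ = ‖c‖ * Real.exp (-x * z.re) := by
  simp [norm_exp, mul_re]

theorem norm_mul_exp_neg_ofReal_mul_le {x : ℝ} (hx : 0 ≤ x) (c : ℂ) {s : ℝ} {z : ℂ}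
    (hz : s ≤ z.re) : ‖c * exp (-(x : ℂ) * z)‖ ≤ ‖c * exp (-(x : ℂ) * s)‖ := by
  simp only [norm_mul_exp_neg_ofReal_mul, ofReal_re]
  gcongr ‖c‖ * Real.exp ?_
  nlinarith

theorem exp_mul_mul_exp_neg_mul (c x y z : ℂ) :
    exp (y * z) * (c * exp (-x * z)) = c * exp (-(x - y) * z) := by
  rw [mul_left_comm, ← exp_add]
  ring_nf

section

variable {a : ℕ → ℂ} {r : ℕ → ℝ}

theorem analyticOnNhd_tsum_mul_exp (hr : ∀ n, 0 ≤ r n) {s : ℝ}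
    (hs : Summable fun n => a n * exp (-(r n : ℂ) * s)) :
    AnalyticOnNhd ℂ (fun z => ∑' n, a n * exp (-(r n : ℂ) * z)) {z | s < z.re} := by
  have hU : IsOpen {z : ℂ | s < z.re} := isOpen_lt continuous_const continuous_re
  refine (differentiableOn_tsum_of_summable_norm hs.norm (fun n => by fun_prop) hU
    fun n z hz => ?_).analyticOnNhd hU
  exact norm_mul_exp_neg_ofReal_mul_le (hr n) _ (le_of_lt hz)

theorem summable_mul_exp_of_le_re (hr : ∀ n, 0 ≤ r n) {s : ℝ}
    (hs : Summable fun n => a n * exp (-(r n : ℂ) * s)) {z : ℂ} (hz : s ≤ z.re) :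
    Summable fun n => a n * exp (-(r n : ℂ) * z) :=
  hs.norm.of_norm_bounded fun n => norm_mul_exp_neg_ofReal_mul_le (hr n) _ hz

theorem tendsto_exp_mul_tsum_of_forall_lt_eq_zero (hr : StrictMono r) {τ : ℝ}
    (hτ : Summable fun m => a m * exp (-(r m : ℂ) * τ)) {n : ℕ} (hlt : ∀ m < n, a m = 0) :
    Tendsto (fun t : ℝ => exp ((r n : ℂ) * t) * ∑' m, a m * exp (-(r m : ℂ) * t)) atTop
      (𝓝 (a n)) := by
  simp only [← tsum_mul_left, exp_mul_mul_exp_neg_mul, ← ofReal_sub]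
  have hsum : Summable fun m => ‖a m * exp (-((r m - r n : ℝ) : ℂ) * τ)‖ := by
    refine (hτ.mul_left (exp ((r n : ℂ) * τ))).norm.congr fun m => ?_
    rw [exp_mul_mul_exp_neg_mul, ofReal_sub]
  convert tendsto_tsum_of_dominated_convergence (g := Pi.single n (a n)) hsum (fun m => ?_) ?_
  · exact (tsum_pi_single n (a n)).symm
  · rcases lt_trichotomy m n with hm | rfl | hm
    · simp [hlt m hm, Pi.single_eq_of_ne hm.ne]
    · simp
    · rw [Pi.single_eq_of_ne hm.ne', tendsto_zero_iff_norm_tendsto_zero]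
      simp only [norm_mul_exp_neg_ofReal_mul, ofReal_re]
      have hexp := Real.tendsto_exp_atBot.comp
        (tendsto_id.const_mul_atTop_of_neg (neg_neg_of_pos (sub_pos.2 (hr hm))))
      simpa using hexp.const_mul ‖a m‖
  · filter_upwards [eventually_ge_atTop τ] with t ht m
    rcases lt_or_ge m n with hm | hm
    · simp [hlt m hm]
    · exact norm_mul_exp_neg_ofReal_mul_le (sub_nonneg.2 (hr.monotone hm)) _ (by simpa using ht)

theorem eq_zero_of_forall_hasSum_mul_exp_eq_zero (hr : StrictMono r) {τ : ℝ}
    (h : ∀ t : ℝ, τ ≤ t → HasSum (fun m => a m * exp (-(r m : ℂ) * t)) 0) (n : ℕ) :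
    a n = 0 := by
  induction n using Nat.strong_induction_on with
  | _ n ih =>
    refine tendsto_nhds_unique
      (tendsto_exp_mul_tsum_of_forall_lt_eq_zero hr (h τ le_rfl).summable ih) ?_
    refine tendsto_const_nhds.congr' ?_
    filter_upwards [eventually_ge_atTop τ] with t ht
    rw [(h t ht).tsum_eq, mul_zero]

end

theorem AnalyticOnNhd.eqOn_zero_of_eventually_ofReal_eq_zero {E : Type*} [NormedAddCommGroup E]
    [NormedSpace ℂ E] {f : ℂ → E} {U : Set ℂ} (hf : AnalyticOnNhd ℂ f U) (hU : IsPreconnected U)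
    {t : ℝ} (ht : (t : ℂ) ∈ U) (h0 : ∀ᶠ s : ℝ in 𝓝 t, f s = 0) : Set.EqOn f 0 U := by
  refine hf.eqOn_zero_of_preconnected_of_frequently_eq_zero hU ht ?_
  have hofReal : Tendsto ((↑) : ℝ → ℂ) (𝓝[≠] t) (𝓝[≠] (t : ℂ)) :=
    continuous_ofReal.continuousWithinAt.tendsto_nhdsWithin fun s hs => ofReal_injective.ne hs
  exact hofReal.frequently (h0.filter_mono nhdsWithin_le_nhds).frequently

theorem generalized_dirichlet_series_uniqueness_general (r : ℕ → ℝ)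
    (hr0 : 0 ≤ r 0) (hmono : StrictMono r)
    (a : ℕ → ℂ)
    (t₁ : ℝ) (ht₁ : 0 < t₁)
    (h : ∀ t ∈ Set.Ioo (0 : ℝ) t₁,
      HasSum (fun n : ℕ => a n * Complex.exp (-(r n : ℂ) * (t : ℂ))) 0) :
    ∀ n, a n = 0 := by
  have hr : ∀ n, 0 ≤ r n := fun n => hr0.trans (hmono.monotone n.zero_le)
  have hs := (h (t₁ / 2) ⟨by positivity, by linarith⟩).summable
  have hmid : 3 * t₁ / 4 ∈ Set.Ioo (0 : ℝ) t₁ := ⟨by positivity, by linarith⟩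
  have hzero : Set.EqOn (fun z => ∑' n, a n * exp (-(r n : ℂ) * z)) 0 {z | t₁ / 2 < z.re} := by
    refine (analyticOnNhd_tsum_mul_exp hr hs).eqOn_zero_of_eventually_ofReal_eq_zero
      (convex_halfSpace_re_gt _).isPreconnected (t := 3 * t₁ / 4) (by simp; linarith) ?_
    filter_upwards [isOpen_Ioo.mem_nhds hmid] with t ht using (h t ht).tsum_eq
  refine eq_zero_of_forall_hasSum_mul_exp_eq_zero hmono (τ := t₁) fun t ht => ?_
  have hre : t₁ / 2 < (t : ℂ).re := by simp; linarith
  convert (summable_mul_exp_of_le_re hr hs hre.le).hasSum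
  exact (hzero hre).symm

/-- Uniqueness of generalized Dirichlet series: if `0 ≤ r_0 < r_1 < ⋯ → ∞`, `{a_n}` is bounded,
and `Σ_n a_n e^{-r_n t} = 0` for all `t ∈ (0, t₁)`, then all coefficients vanish. -/
theorem generalized_dirichlet_series_uniqueness (r : ℕ → ℝ)
    (hr0 : 0 ≤ r 0) (hmono : StrictMono r) (hrtop : Tendsto r atTop atTop)
    (a : ℕ → ℂ) (ha : ∃ C : ℝ, ∀ n, ‖a n‖ ≤ C)
    (t₁ : ℝ) (ht₁ : 0 < t₁)
    (h : ∀ t ∈ Set.Ioo (0 : ℝ) t₁,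
      HasSum (fun n : ℕ => a n * Complex.exp (-(r n : ℂ) * (t : ℂ))) 0) :
    ∀ n, a n = 0 :=
  generalized_dirichlet_series_uniqueness_general r hr0 hmono a t₁ ht₁ h
end
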